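/- Let j ∈ {1,2}. Assume the real-valued noise ε is ordinary smooth, i.e. there exist r, c_ε, C_ε > 0 with c_ε(1 + |t|)^{-r} ≤ |f_ε*(t)| ≤ C_ε(1 + |t|)^{-r} for all t ∈ ℝ, with r > 1, and assume the kernel K satisfies ∫|K*(t)|(1 + |t|)^r dt < √C_{(K*)} and ∫|K*(t)|²(1 + |t|)^{2r} dt < C_{(K*)} for some C_{(K*)} > 0. Then for every 0 < h_j ≤ 1, Ṽ₀(n, h_j) ≤ (C/((2π)²)) n^{-1} h_j^{-1 - 2r}, with C := c_ε^{-2} C_{(K*)} max{‖f_ε*‖_{L¹(ℝ)}, 1}. -/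

import Mathlib

open MeasureTheory ProbabilityTheory Real Finset

noncomputable section

/-- Two-argument arctangent, as defined in the paper (taking values in `[-π, π]`). -/
def atan2 (w₁ w₂ : ℝ) : ℝ :=
  if w₂ = 0 then (if 0 < w₁ then π / 2 else if w₁ < 0 then -(π / 2) else 0)
  else if 0 < w₂ then Real.arctan (w₁ / w₂)
  else if 0 < w₁ then Real.arctan (w₁ / w₂) + π
  else Real.arctan (w₁ / w₂) - π

/-- The circular divergence `d_c(θ₁, θ₂) = 1 - cos(θ₁ - θ₂)`. -/
def dc (θ₁ θ₂ : ℝ) : ℝ := 1 - Real.cos (θ₁ - θ₂)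

/-- The quantity `δ` of Assumption 1 at a point, built from the values of `m₁` and `m₂`. -/
def deltaAt (w₁ w₂ : ℝ) : ℝ :=
  if w₁ ≠ 0 ∧ w₂ ≠ 0 then min |w₁| |w₂| else if w₂ = 0 then |w₁| else |w₂|

/-- Fourier transform `f⋆(t) = ∫ e^{ixt} f(x) dx` of a function on `ℝ`. -/
def ft (f : ℝ → ℝ) (t : ℝ) : ℂ :=
  ∫ x : ℝ, Complex.exp (Complex.I * (t : ℂ) * (x : ℂ)) * (f x : ℂ)

/-- Rescaled kernel `K_h = (1/h) K(·/h)`. -/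
def Kh (K : ℝ → ℝ) (h : ℝ) : ℝ → ℝ := fun y => (1 / h) * K (y / h)

/-- Convolution `f * g (x) = ∫ f(x - y) g(y) dy` on `ℝ`. -/
def conv (f g : ℝ → ℝ) (x : ℝ) : ℝ := ∫ y : ℝ, f (x - y) * g y

/-- Sup norm `‖f‖_∞ = sup_y |f(y)|`. -/
def supnorm (f : ℝ → ℝ) : ℝ := ⨆ y : ℝ, |f y|

open Classical in
/-- `M(K)`: the `L¹` norm of `K` when `K` is integrable, otherwise `‖K⋆‖_∞`. -/
def MK (K : ℝ → ℝ) (Kstar : ℝ → ℂ) : ℝ :=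
  if Integrable K volume then ∫ y : ℝ, |K y| else ⨆ t : ℝ, ‖Kstar t‖

/-- Sup norm of `K⋆`. -/
def supKstar (Kstar : ℝ → ℂ) : ℝ := ⨆ t : ℝ, ‖Kstar t‖

/-- Ordinary smooth noise on `ℝ` of index `r`. -/
def linOS (fε : ℝ → ℝ) (r cε Cε : ℝ) : Prop :=
  ∀ t : ℝ, cε * (1 + |t|) ^ (-r) ≤ ‖ft fε t‖ ∧
    ‖ft fε t‖ ≤ Cε * (1 + |t|) ^ (-r)

/-- Supersmooth noise on `ℝ`. -/
def linSS (fε : ℝ → ℝ) (cε Cε γ ρ ρ₀ ρ₁ : ℝ) : Prop :=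
  ∀ t : ℝ, cε * (1 + |t| ^ 2) ^ (-ρ₀ / 2) * Real.exp (-γ * |t| ^ ρ) ≤ ‖ft fε t‖ ∧
    ‖ft fε t‖ ≤ Cε * (1 + |t| ^ 2) ^ (-ρ₁ / 2) * Real.exp (-γ * |t| ^ ρ)

/-- Membership in the Hölder class `H(β, Λ)` of functions on `(0,1)`. -/
def memHolder (f : ℝ → ℝ) (β Λ : ℝ) : Prop :=
  ContDiffOn ℝ (⌊β⌋₊ : ℕ∞) f (Set.Ioo 0 1) ∧
    ∀ y ∈ Set.Ioo (0 : ℝ) 1, ∀ z ∈ Set.Ioo (0 : ℝ) 1,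
      |iteratedDerivWithin ⌊β⌋₊ f (Set.Ioo 0 1) z - iteratedDerivWithin ⌊β⌋₊ f (Set.Ioo 0 1) y| ≤
        Λ * |z - y| ^ (β - (⌊β⌋₊ : ℝ))

/-- The constant `C_{K,κ} = ∫ (1+|y|)^κ |K(y)| dy`. -/
def CKkappa (K : ℝ → ℝ) (κ : ℝ) : ℝ := ∫ y : ℝ, (1 + |y|) ^ κ * |K y|

/-- `K` is a kernel of order `κ`. -/
def kernelOrder (K : ℝ → ℝ) (κ : ℝ) : Prop :=
  Integrable (fun y => (1 + |y|) ^ κ * |K y|) ∧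
    ∀ k : ℕ, 1 ≤ k → k ≤ ⌊κ⌋₊ → (∫ y : ℝ, y ^ k * K y) = 0

/-- Noise-compatibility assumption on `K⋆` (ordinary smooth case), with constant `C_{(K⋆)}`:
`∫|K⋆(t)|(1+|t|)^r dt < √C_{(K⋆)}` and `∫|K⋆(t)|²(1+|t|)^{2r} dt < C_{(K⋆)}`. -/
def KstarCompat (Kstar : ℝ → ℂ) (r CKs : ℝ) : Prop :=
  Integrable (fun t : ℝ => ‖Kstar t‖ * (1 + |t|) ^ r) ∧
  Integrable (fun t : ℝ => ‖Kstar t‖ ^ 2 * (1 + |t|) ^ (2 * r)) ∧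
  (∫ t : ℝ, ‖Kstar t‖ * (1 + |t|) ^ r) < Real.sqrt CKs ∧
  (∫ t : ℝ, ‖Kstar t‖ ^ 2 * (1 + |t|) ^ (2 * r)) < CKs

/-- The linear-predictor errors-in-variables regression model:
`Θ_k = m(X_k) + ζ_k (mod 2π)` with `X_k ∈ [0,1]`, `Z_k = X_k + ε_k`, with
`m = atan2(m₁, m₂)`, `m₁(x) = E[sin Θ | X = x]`, `m₂(x) = E[cos Θ | X = x]`,
the `(X_k, ζ_k, ε_k)` i.i.d., `ε_k` real-valued with density `fε`, independent of `X_k`. -/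
structure LinModel (Ω : Type*) [MeasurableSpace Ω] (μ : Measure Ω) (n : ℕ) where
  X : Fin n → Ω → ℝ
  Θ : Fin n → Ω → ℝ
  Z : Fin n → Ω → ℝ
  ζ : Fin n → Ω → ℝ
  ε : Fin n → Ω → ℝ
  m₁ : ℝ → ℝ
  m₂ : ℝ → ℝ
  fX : ℝ → ℝ
  fε : ℝ → ℝ
  measX : ∀ k, Measurable (X k)
  measΘ : ∀ k, Measurable (Θ k)
  measZ : ∀ k, Measurable (Z k)
  measζ : ∀ k, Measurable (ζ k)
  measε : ∀ k, Measurable (ε k)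
  measm₁ : Measurable m₁
  measm₂ : Measurable m₂
  measfX : Measurable fX
  measfε : Measurable fε
  intfε : Integrable fε
  hXrange : ∀ k ω, X k ω ∈ Set.Icc (0 : ℝ) 1
  hζrange : ∀ k ω, ζ k ω ∈ Set.Ico (-π) π
  hΘ : ∀ k ω, Θ k ω = toIcoMod Real.two_pi_pos (-π) (atan2 (m₁ (X k ω)) (m₂ (X k ω)) + ζ k ω)
  hZ : ∀ k ω, Z k ω = X k ω + ε k ω
  iid : ∀ j k, IdentDistrib (fun ω => (X j ω, ζ j ω, ε j ω)) (fun ω => (X k ω, ζ k ω, ε k ω)) μ μ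
  indep : iIndepFun (fun k ω => (X k ω, ζ k ω, ε k ω)) μ
  indepXε : ∀ k, IndepFun (X k) (ε k) μ
  εdensity : ∀ k, Measure.map (ε k) μ = volume.withDensity fun x => ENNReal.ofReal (fε x)
  Xdensity : ∀ k, Measure.map (X k) μ =
    (volume.restrict (Set.Icc (0 : ℝ) 1)).withDensity fun x => ENNReal.ofReal (fX x)
  hm₁ : ∀ k, (fun ω => m₁ (X k ω)) =ᵐ[μ]
    μ[(fun ω => Real.sin (Θ k ω)) | MeasurableSpace.comap (X k) inferInstance]
  hm₂ : ∀ k, (fun ω => m₂ (X k ω)) =ᵐ[μ]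
    μ[(fun ω => Real.cos (Θ k ω)) | MeasurableSpace.comap (X k) inferInstance]

namespace LinModel

variable {Ω : Type*} [MeasurableSpace Ω] {μ : Measure Ω} {n : ℕ}

/-- `p₁ = m₁ · fX`. -/
def p₁ (M : LinModel Ω μ n) : ℝ → ℝ := fun x => M.m₁ x * M.fX x

/-- `p₂ = m₂ · fX`. -/
def p₂ (M : LinModel Ω μ n) : ℝ → ℝ := fun x => M.m₂ x * M.fX x

/-- The regression function `m = atan2(m₁, m₂)`. -/
def mfun (M : LinModel Ω μ n) : ℝ → ℝ := fun x => atan2 (M.m₁ x) (M.m₂ x)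

/-- The deconvolution kernel estimator `p̂_{s,h}(x)` (with `s = sin` for `p₁`, `s = cos`
for `p₂`), where `Kstar` is the Fourier transform of the kernel `K` (`K_h⋆(t) = K⋆(th)`). -/
def hatP (M : LinModel Ω μ n) (s : ℝ → ℝ) (Kstar : ℝ → ℂ) (h x : ℝ) (ω : Ω) : ℂ :=
  (1 / (n : ℂ)) * ∑ k : Fin n, (s (M.Θ k ω) : ℂ) *
    (((1 / (2 * π) : ℝ) : ℂ) * ∫ t : ℝ,
      Complex.exp (-(Complex.I * (t : ℂ) * (x : ℂ))) *
        Complex.exp (Complex.I * (t : ℂ) * (M.Z k ω : ℂ)) * Kstar (t * h) / ft M.fε t)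

/-- The doubly-smoothed estimator `p̂_{s,h,h'}(x) = (K_{h'} ∗ p̂_{s,h})(x)`. -/
def hatPP (M : LinModel Ω μ n) (s K : ℝ → ℝ) (Kstar : ℝ → ℂ) (h h' x : ℝ) (ω : Ω) : ℂ :=
  ∫ y : ℝ, ((Kh K h' y : ℝ) : ℂ) * M.hatP s Kstar h (x - y) ω

end LinModel

/-- Expectation of a complex-valued statistic. -/
def cmean {Ω : Type*} [MeasurableSpace Ω] (μ : Measure Ω) (W : Ω → ℂ) : ℂ := ∫ ω, W ω ∂μ

/-- Variance (pointwise risk around the mean) of a complex-valued statistic. -/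
def cvar {Ω : Type*} [MeasurableSpace Ω] (μ : Measure Ω) (W : Ω → ℂ) : ℝ :=
  ∫ ω, ‖W ω - cmean μ W‖ ^ 2 ∂μ

/-- The variance bound `Ṽ₀(n, h)`. -/
def VtildeZero (Kstar : ℝ → ℂ) (fε : ℝ → ℝ) (n : ℕ) (h : ℝ) : ℝ :=
  (1 / ((2 * π) ^ 2 * n)) *
    min ((∫ t : ℝ, ‖Kstar (t * h) / ft fε t‖ ^ 2) * (∫ t : ℝ, ‖ft fε t‖))
      ((∫ t : ℝ, ‖Kstar (t * h) / ft fε t‖) ^ 2)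

/-- The penalized variance term `Ṽ(n, h) = c₀ log(n) Ṽ₀(n, h)`. -/
def Vtilde (c0 : ℝ) (Kstar : ℝ → ℂ) (fε : ℝ → ℝ) (n : ℕ) (h : ℝ) : ℝ :=
  c0 * Real.log n * VtildeZero Kstar fε n h

/-- The collection of bandwidths `𝓗`. -/
def calH (Kstar : ℝ → ℂ) (fε : ℝ → ℝ) (n : ℕ) : Set ℝ :=
  {h | ∃ k : ℕ, 1 ≤ k ∧ k ≤ n ∧ h = 1 / (k : ℝ) ∧
    Real.log n / n ≤ (∫ t : ℝ, ‖Kstar (t * h) / ft fε t‖ ^ 2) /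
      (∫ t : ℝ, ‖Kstar (t * h) / ft fε t‖) ^ 2}

namespace LinModel

variable {Ω : Type*} [MeasurableSpace Ω] {μ : Measure Ω} {n : ℕ}

/-- The Goldenshluger–Lepski quantity `Ã(h, x)`. -/
def GLA (M : LinModel Ω μ n) (s K : ℝ → ℝ) (Kstar : ℝ → ℂ) (c0 : ℝ) (h x : ℝ) (ω : Ω) : ℝ :=
  sSup {v | ∃ h' ∈ calH Kstar M.fε n,
    v = max (‖M.hatPP s K Kstar h h' x ω - M.hatP s Kstar h' x ω‖ -
      Real.sqrt (Vtilde c0 Kstar M.fε n h')) 0}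

/-- `hhat` is a data-driven Goldenshluger–Lepski selected bandwidth:
for each sample point it minimizes `Ã(h, x) + √Ṽ(n, h)` over `𝓗`. -/
def isGLSelection (M : LinModel Ω μ n) (s K : ℝ → ℝ) (Kstar : ℝ → ℂ) (c0 x : ℝ)
    (hhat : Ω → ℝ) : Prop :=
  ∀ ω, hhat ω ∈ calH Kstar M.fε n ∧ ∀ h ∈ calH Kstar M.fε n,
    M.GLA s K Kstar c0 (hhat ω) x ω + Real.sqrt (Vtilde c0 Kstar M.fε n (hhat ω)) ≤
      M.GLA s K Kstar c0 h x ω + Real.sqrt (Vtilde c0 Kstar M.fε n h)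

end LinModel

/-!
The lower bound `|f_ε*(t)| ≥ c_ε (1 + |t|)^{-r}` turns `|K*(th) / f_ε*(t)|` into at most
`c_ε⁻¹ (1 + |t|)^r |K*(th)|`, and for `h ≤ 1` we have `1 + |t| ≤ h⁻¹ (1 + |th|)`, so the square
is at most `c_ε⁻² h^{-2r} |K*(th)|² (1 + |th|)^{2r}`. The substitution `u = th` costs one more
factor `h⁻¹`, giving `‖K_h*/f_ε*‖²_{L²} ≤ c_ε⁻² C_{(K*)} h^{-1-2r}`; the first term of the
minimum defining `Ṽ₀` then yields the claim.
-/

lemma one_add_abs_le_inv_mul_one_add_abs_mul {h : ℝ} (hh0 : 0 < h) (hh1 : h ≤ 1) (t : ℝ) :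
    1 + |t| ≤ h⁻¹ * (1 + |t * h|) := by
  have hinv : 1 ≤ h⁻¹ := one_le_inv_iff₀.mpr ⟨hh0, hh1⟩
  rw [abs_mul, abs_of_pos hh0, mul_add, mul_one, mul_comm |t| h, inv_mul_cancel_left₀ hh0.ne']
  linarith

lemma one_add_abs_rpow_le {h r : ℝ} (hh0 : 0 < h) (hh1 : h ≤ 1) (hr : 0 ≤ r) (t : ℝ) :
    (1 + |t|) ^ r ≤ h ^ (-r) * (1 + |t * h|) ^ r :=
  calc (1 + |t|) ^ r ≤ (h⁻¹ * (1 + |t * h|)) ^ r :=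
        rpow_le_rpow (by positivity) (one_add_abs_le_inv_mul_one_add_abs_mul hh0 hh1 t) hr
    _ = h ^ (-r) * (1 + |t * h|) ^ r := by
        rw [mul_rpow (by positivity) (by positivity), inv_rpow hh0.le, rpow_neg hh0.le]

section OrdinarySmoothLowerBound

variable {φ : ℝ → ℂ} {r c : ℝ}

lemma norm_div_le_of_lower_bound (hc : 0 < c) (hφ : ∀ t, c * (1 + |t|) ^ (-r) ≤ ‖φ t‖)
    (a : ℂ) (t : ℝ) : ‖a / φ t‖ ≤ c⁻¹ * (1 + |t|) ^ r * ‖a‖ := by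
  have hpos : 0 < c * (1 + |t|) ^ (-r) := by positivity
  calc ‖a / φ t‖ = ‖a‖ / ‖φ t‖ := norm_div a (φ t)
    _ ≤ ‖a‖ / (c * (1 + |t|) ^ (-r)) := div_le_div_of_nonneg_left (norm_nonneg a) hpos (hφ t)
    _ = c⁻¹ * (1 + |t|) ^ r * ‖a‖ := by
        rw [rpow_neg (by positivity)]
        field_simp

variable {K : ℝ → ℂ} {h : ℝ}

lemma norm_rescaled_div_sq_le (hc : 0 < c) (hr : 0 ≤ r)
    (hφ : ∀ t, c * (1 + |t|) ^ (-r) ≤ ‖φ t‖) (hh0 : 0 < h) (hh1 : h ≤ 1) (t : ℝ) :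
    ‖K (t * h) / φ t‖ ^ 2 ≤
      (c ^ 2)⁻¹ * h ^ (-(2 * r)) * (‖K (t * h)‖ ^ 2 * (1 + |t * h|) ^ (2 * r)) := by
  have hbound : ‖K (t * h) / φ t‖ ≤
      c⁻¹ * h ^ (-r) * (‖K (t * h)‖ * (1 + |t * h|) ^ r) :=
    calc ‖K (t * h) / φ t‖ ≤ c⁻¹ * (1 + |t|) ^ r * ‖K (t * h)‖ :=
          norm_div_le_of_lower_bound hc hφ _ t
      _ ≤ c⁻¹ * (h ^ (-r) * (1 + |t * h|) ^ r) * ‖K (t * h)‖ := by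
          gcongr
          exact one_add_abs_rpow_le hh0 hh1 hr t
      _ = c⁻¹ * h ^ (-r) * (‖K (t * h)‖ * (1 + |t * h|) ^ r) := by ring
  calc ‖K (t * h) / φ t‖ ^ 2
      ≤ (c⁻¹ * h ^ (-r) * (‖K (t * h)‖ * (1 + |t * h|) ^ r)) ^ 2 := by gcongr
    _ = (c ^ 2)⁻¹ * h ^ (-(2 * r)) * (‖K (t * h)‖ ^ 2 * (1 + |t * h|) ^ (2 * r)) := by
        rw [mul_pow, mul_pow, mul_pow, inv_pow, ← rpow_mul_natCast hh0.le,
          ← rpow_mul_natCast (by positivity)]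
        ring_nf

lemma integral_norm_rescaled_div_sq_le (hc : 0 < c) (hr : 0 ≤ r)
    (hφ : ∀ t, c * (1 + |t|) ^ (-r) ≤ ‖φ t‖) (hh0 : 0 < h) (hh1 : h ≤ 1)
    (hK : Integrable fun t => ‖K t‖ ^ 2 * (1 + |t|) ^ (2 * r)) :
    ∫ t, ‖K (t * h) / φ t‖ ^ 2 ≤
      (c ^ 2)⁻¹ * h ^ (-1 - 2 * r) * ∫ t, ‖K t‖ ^ 2 * (1 + |t|) ^ (2 * r) := by
  set g : ℝ → ℝ := fun t => ‖K t‖ ^ 2 * (1 + |t|) ^ (2 * r)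
  have hmono : ∫ t, ‖K (t * h) / φ t‖ ^ 2 ≤ ∫ t, (c ^ 2)⁻¹ * h ^ (-(2 * r)) * g (t * h) :=
    integral_mono_of_nonneg (.of_forall fun t => by positivity)
      ((hK.comp_mul_right' hh0.ne').const_mul _)
      (.of_forall (norm_rescaled_div_sq_le hc hr hφ hh0 hh1))
  have hpow : h ^ (-1 - 2 * r) = h⁻¹ * h ^ (-(2 * r)) := by
    rw [sub_eq_add_neg, rpow_add hh0, rpow_neg_one]
  rw [integral_const_mul, Measure.integral_comp_mul_right g h, abs_of_pos (inv_pos.mpr hh0),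
    smul_eq_mul] at hmono
  rw [hpow]
  linarith

end OrdinarySmoothLowerBound

theorem statement13_general (fε : ℝ → ℝ) (r cε Cε : ℝ)
    (hcε : 0 < cε) (hr : 1 < r) (hOS : linOS fε r cε Cε)
    (Kstar : ℝ → ℂ)
    (CKs : ℝ) (hcompat : KstarCompat Kstar r CKs)
    (n : ℕ) (h : ℝ) (hh0 : 0 < h) (hh1 : h ≤ 1) :
    VtildeZero Kstar fε n h ≤
      ((cε ^ 2)⁻¹ * CKs * max (∫ t : ℝ, ‖ft fε t‖) 1) / (2 * π) ^ 2 *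
        (n : ℝ)⁻¹ * h ^ (-1 - 2 * r) := by
  obtain ⟨-, hKsq, -, hKsqBound⟩ := hcompat
  set A := ∫ t, ‖Kstar (t * h) / ft fε t‖ ^ 2
  set B := ∫ t, ‖ft fε t‖
  have hA : A ≤ (cε ^ 2)⁻¹ * h ^ (-1 - 2 * r) * CKs :=
    (integral_norm_rescaled_div_sq_le hcε (by linarith) (fun t => (hOS t).1) hh0 hh1
      hKsq).trans (mul_le_mul_of_nonneg_left hKsqBound.le (by positivity))
  have hA0 : 0 ≤ A := integral_nonneg fun t => by positivity
  have hB0 : 0 ≤ B := integral_nonneg fun t => norm_nonneg _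
  have hmin : min (A * B) ((∫ t, ‖Kstar (t * h) / ft fε t‖) ^ 2) ≤
      (cε ^ 2)⁻¹ * h ^ (-1 - 2 * r) * CKs * max B 1 :=
    (min_le_left _ _).trans (mul_le_mul hA (le_max_left B 1) hB0 (hA0.trans hA))
  calc VtildeZero Kstar fε n h
      ≤ 1 / ((2 * π) ^ 2 * n) * ((cε ^ 2)⁻¹ * h ^ (-1 - 2 * r) * CKs * max B 1) :=
        mul_le_mul_of_nonneg_left hmin (by positivity)
    _ = ((cε ^ 2)⁻¹ * CKs * max B 1) / (2 * π) ^ 2 * (n : ℝ)⁻¹ * h ^ (-1 - 2 * r) := by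
        ring

/-- bound on `Ṽ₀(n, h)` under ordinary smooth noise with `r > 1`:
`Ṽ₀(n, h) ≤ (C/(2π)²) n⁻¹ h^{-1-2r}` with `C = c_ε⁻² C_{(K⋆)} max{‖fε⋆‖_{L¹}, 1}`. -/
theorem statement13 (fε : ℝ → ℝ) (r cε Cε : ℝ)
    (hcε : 0 < cε) (hCε : 0 < Cε) (hr : 1 < r) (hOS : linOS fε r cε Cε)
    (K : ℝ → ℝ) (Kstar : ℝ → ℂ)
    (hKint : Integrable K) (hKone : (∫ y : ℝ, K y) = 1)
    (hKstar : ∀ t, Kstar t = ft K t)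
    (CKs : ℝ) (hCKs : 0 < CKs) (hcompat : KstarCompat Kstar r CKs)
    (n : ℕ) (j : Fin 2) (h : ℝ) (hh0 : 0 < h) (hh1 : h ≤ 1) :
    VtildeZero Kstar fε n h ≤
      ((cε ^ 2)⁻¹ * CKs * max (∫ t : ℝ, ‖ft fε t‖) 1) / (2 * π) ^ 2 *
        (n : ℝ)⁻¹ * h ^ (-1 - 2 * r) :=
  statement13_general fε r cε Cε hcε hr hOS Kstar CKs hcompat n h hh0 hh1
end
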